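/- arXiv:1303.3993 — 5 statements merged into one kernel-verified Lean document; each statement's English description precedes it below -/
import Mathlib

section
/- Let f : ℤ → ℝ be nonnegative with bounded variation and let {p < r < q} be an essential peak for f. Then the set {w ∈ ℤ : w > 0 and A_w f(r) = Mf(r)} is nonempty and finite; in particular the radius ω(r), defined as the largest element of this set, is well defined. -/
open Finset

noncomputable section

/-- Average of `f : ℤ → ℝ` over the integer interval `[x, y]`:
`A_{x,y} f = (1/(y-x+1)) ∑_{k=x}^{y} f(k)`. -/
def avg (f : ℤ → ℝ) (x y : ℤ) : ℝ :=
  (∑ k ∈ Finset.Icc x y, f k) / ((y - x + 1 : ℤ) : ℝ)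

/-- The discrete centered Hardy–Littlewood maximal function
`Mf(n) = sup_{r ≥ 0} (1/(2r+1)) ∑_{k=-r}^{r} |f(n+k)|`. -/
def dM (f : ℤ → ℝ) (n : ℤ) : ℝ :=
  ⨆ r : ℕ, avg (fun k => |f k|) (n - r) (n + r)

/-- The total variation `Var f = ∑_{k ∈ ℤ} |f(k+1) - f(k)|`. -/
def dVar (f : ℤ → ℝ) : ℝ := ∑' k : ℤ, |f (k + 1) - f k|

/-- `f` has bounded variation. -/
def BddVar (f : ℤ → ℝ) : Prop := Summable fun k : ℤ => |f (k + 1) - f k|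

/-- A peak for `f`: integers `p < r < q` with `Mf(p) < Mf(r)` and `Mf(q) < Mf(r)`. -/
def IsPeak (f : ℤ → ℝ) (p r q : ℤ) : Prop :=
  p < r ∧ r < q ∧ dM f p < dM f r ∧ dM f q < dM f r

/-- The variation of a peak `{p < r < q}`: `2·Mf(r) - Mf(p) - Mf(q)`. -/
def peakVar (f : ℤ → ℝ) (p r q : ℤ) : ℝ := 2 * dM f r - dM f p - dM f q

/-- An essential peak: `max_{p<k<q} f(k) ≤ Mf(r) - (1/4)·Var{p,r,q}`. -/
def IsEssentialPeak (f : ℤ → ℝ) (p r q : ℤ) : Prop :=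
  IsPeak f p r q ∧
    ∀ k : ℤ, p < k → k < q → f k ≤ dM f r - (1 / 4) * peakVar f p r q

/-- `w` is the radius `ω(r)` of an (essential) peak with center `r`:
the largest integer `w > 0` with `A_w f(r) = Mf(r)`. -/
def IsRadius (f : ℤ → ℝ) (r w : ℤ) : Prop :=
  0 < w ∧ avg f (r - w) (r + w) = dM f r ∧
    ∀ w' : ℤ, 0 < w' → avg f (r - w') (r + w') = dM f r → w' ≤ w

lemma tele (f : ℤ → ℝ) (a : ℤ) (m : ℕ) :
    |f (a + m) - f a| ≤ ∑ k ∈ Finset.range m, |f (a + k + 1) - f (a + k)| := by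
  induction m with
  | zero => simp
  | succ m ih =>
    rw [Finset.sum_range_succ]
    have h1 : f (a + ((m : ℕ) + 1 : ℕ)) - f a
        = (f (a + m) - f a) + (f (a + m + 1) - f (a + m)) := by
      push_cast
      ring_nf
    rw [h1]
    exact le_trans (abs_add_le _ _) (add_le_add ih le_rfl)

lemma diff_bound (f : ℤ → ℝ) (hbv : BddVar f) (a : ℤ) (m : ℕ) :
    |f (a + m) - f a| ≤ dVar f := by
  refine le_trans (tele f a m) ?_
  have : ∑ k ∈ Finset.range m, |f (a + k + 1) - f (a + k)|
      = ∑ j ∈ (Finset.range m).map ⟨fun k : ℕ => a + k,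
          fun x y h => Nat.cast_injective (add_left_cancel h)⟩, |f (j + 1) - f j| := by
    rw [Finset.sum_map]
    rfl
  rw [this]
  exact Summable.sum_le_tsum _ (fun i _ => abs_nonneg _) hbv

lemma f_le_bound (f : ℤ → ℝ) (hbv : BddVar f) (n : ℤ) : f n ≤ f 0 + dVar f := by
  have h : |f n - f 0| ≤ dVar f := by
    rcases le_or_gt 0 n with h0 | h0
    · have := diff_bound f hbv 0 n.toNat
      rwa [zero_add, Int.toNat_of_nonneg h0] at this
    · have := diff_bound f hbv n (-n).toNat
      rw [Int.toNat_of_nonneg (by omega), show n + -n = 0 by ring, abs_sub_comm] at this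
      exact this
  have := abs_le.1 h
  linarith [this.2]


section avglem
variable (f : ℤ → ℝ)

lemma denom_eq (n : ℤ) (w : ℕ) : ((n + w) - (n - w) + 1 : ℤ) = 2 * w + 1 := by ring

lemma avg_w_nonneg (hf : ∀ n, 0 ≤ f n) (n : ℤ) (w : ℕ) : 0 ≤ avg f (n - w) (n + w) := by
  unfold avg
  apply div_nonneg (Finset.sum_nonneg fun k _ => hf k)
  rw [denom_eq]
  positivity

lemma card_Icc_w (n : ℤ) (w : ℕ) : (Finset.Icc (n - w) (n + w)).card = 2 * w + 1 := by
  rw [Int.card_Icc]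
  omega

lemma avg_w_le (C : ℝ) (hC : ∀ n, f n ≤ C) (n : ℤ) (w : ℕ) : avg f (n - w) (n + w) ≤ C := by
  unfold avg
  rw [denom_eq]
  rw [div_le_iff₀ (by positivity)]
  calc ∑ k ∈ Finset.Icc (n - w) (n + w), f k ≤ ∑ k ∈ Finset.Icc (n - w) (n + w), C :=
        Finset.sum_le_sum fun k _ => hC k
    _ = (2 * w + 1 : ℕ) * C := by rw [Finset.sum_const, card_Icc_w]; simp [nsmul_eq_mul]
    _ = C * ((2 * w + 1 : ℤ) : ℝ) := by push_cast; ring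

lemma absf_eq (hf : ∀ n, 0 ≤ f n) : (fun k => |f k|) = f :=
  funext fun k => abs_of_nonneg (hf k)

lemma dM_eq (hf : ∀ n, 0 ≤ f n) (n : ℤ) :
    dM f n = ⨆ w : ℕ, avg f (n - w) (n + w) := by
  rw [dM, absf_eq f hf]

lemma bdd_range (hbv : BddVar f) (n : ℤ) :
    BddAbove (Set.range fun w : ℕ => avg f (n - w) (n + w)) := by
  refine ⟨f 0 + dVar f, ?_⟩
  rintro _ ⟨w, rfl⟩
  exact avg_w_le f _ (f_le_bound f hbv) n w

lemma avg_le_dM (hf : ∀ n, 0 ≤ f n) (hbv : BddVar f) (n : ℤ) (w : ℕ) :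
    avg f (n - w) (n + w) ≤ dM f n := by
  rw [dM_eq f hf]
  exact le_ciSup (bdd_range f hbv n) w

end avglem

lemma key_compare (f : ℤ → ℝ) (hf : ∀ n, 0 ≤ f n) (hbv : BddVar f) (p r : ℤ)
    (hpr : p < r) (w : ℕ) :
    avg f (r - w) (r + w) ≤
      dM f p + 2 * ((r - p).toNat : ℝ) * dM f p / (2 * w + 1) := by
  set c : ℕ := (r - p).toNat with hc
  have hcz : (c : ℤ) = r - p := Int.toNat_of_nonneg (by omega)
  have hd : (0:ℝ) < 2 * w + 1 := by positivity
  have hsub : Finset.Icc (r - w) (r + w) ⊆ Finset.Icc (p - ((w + c : ℕ) : ℤ)) (p + ((w + c : ℕ) : ℤ)) := by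
    apply Finset.Icc_subset_Icc <;> push_cast <;> omega
  have hS : ∑ k ∈ Finset.Icc (r - (w:ℤ)) (r + w), f k
      ≤ ∑ k ∈ Finset.Icc (p - ((w + c : ℕ) : ℤ)) (p + ((w + c : ℕ) : ℤ)), f k :=
    Finset.sum_le_sum_of_subset_of_nonneg hsub (fun k _ _ => hf k)
  have hA : avg f (p - ((w + c : ℕ) : ℤ)) (p + ((w + c : ℕ) : ℤ)) ≤ dM f p :=
    avg_le_dM f hf hbv p (w + c)
  have hd' : (0:ℝ) < 2 * (w + c : ℕ) + 1 := by positivity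
  have hS' : ∑ k ∈ Finset.Icc (p - ((w + c : ℕ) : ℤ)) (p + ((w + c : ℕ) : ℤ)), f k
      = avg f (p - ((w + c : ℕ) : ℤ)) (p + ((w + c : ℕ) : ℤ)) * (2 * ((w + c : ℕ) : ℝ) + 1) := by
    unfold avg
    rw [denom_eq]
    push_cast
    field_simp
  have e1 : avg f (r - (w:ℤ)) (r + w)
      = (∑ k ∈ Finset.Icc (r - (w:ℤ)) (r + w), f k) / (2 * (w:ℝ) + 1) := by
    unfold avg
    rw [denom_eq]
    push_cast
    ring_nf
  have hMp0 : 0 ≤ dM f p :=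
    le_trans (avg_w_nonneg f hf p 0) (avg_le_dM f hf hbv p 0)
  have step : avg f (r - (w:ℤ)) (r + w) ≤ dM f p * (2 * ((w + c : ℕ) : ℝ) + 1) / (2 * (w:ℝ) + 1) := by
    rw [e1]
    gcongr
    calc ∑ k ∈ Finset.Icc (r - (w:ℤ)) (r + w), f k
        ≤ avg f (p - ((w + c : ℕ) : ℤ)) (p + ((w + c : ℕ) : ℤ)) * (2 * ((w + c : ℕ) : ℝ) + 1) := by
          rw [← hS']; exact hS
      _ ≤ dM f p * (2 * ((w + c : ℕ) : ℝ) + 1) := by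
          apply mul_le_mul_of_nonneg_right hA (by positivity)
  calc avg f (r - (w:ℤ)) (r + w) ≤ dM f p * (2 * ((w + c : ℕ) : ℝ) + 1) / (2 * (w:ℝ) + 1) := step
    _ = dM f p + 2 * (c : ℝ) * dM f p / (2 * w + 1) := by
        push_cast
        field_simp
        ring

/-- for a nonnegative `f` of bounded variation and an essential peak
`{p < r < q}`, the set `{w > 0 : A_w f(r) = Mf(r)}` is nonempty and finite, so the
radius `ω(r)` (its largest element) is well defined. -/
theorem stmt1 (f : ℤ → ℝ) (hf : ∀ n, 0 ≤ f n) (hbv : BddVar f)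
    (p r q : ℤ) (hpk : IsEssentialPeak f p r q) :
    {w : ℤ | 0 < w ∧ avg f (r - w) (r + w) = dM f r}.Nonempty ∧
      {w : ℤ | 0 < w ∧ avg f (r - w) (r + w) = dM f r}.Finite := by
  obtain ⟨⟨hpr, hrq, hMp, hMq⟩, hess⟩ := hpk
  have hMp0 : 0 ≤ dM f p :=
    le_trans (avg_w_nonneg f hf p 0) (avg_le_dM f hf hbv p 0)
  set c : ℕ := (r - p).toNat with hc
  -- choose N
  obtain ⟨N, hN⟩ : ∃ N : ℕ, 2 * (c : ℝ) * dM f p / (2 * N + 1) < dM f r - dM f p := by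
    obtain ⟨N, hN⟩ := exists_nat_gt (2 * (c : ℝ) * dM f p / (dM f r - dM f p))
    refine ⟨N, ?_⟩
    have h1 : 2 * (c : ℝ) * dM f p < N * (dM f r - dM f p) := by
      rw [div_lt_iff₀ (by linarith)] at hN
      linarith
    rw [div_lt_iff₀ (by positivity)]
    have hN0 : (0:ℝ) ≤ N := Nat.cast_nonneg N
    nlinarith
  set B : ℝ := dM f p + 2 * (c : ℝ) * dM f p / (2 * N + 1) with hB
  have hBlt : B < dM f r := by rw [hB]; linarith
  have htail : ∀ w : ℕ, N ≤ w → avg f (r - w) (r + w) ≤ B := by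
    intro w hw
    refine le_trans (key_compare f hf hbv p r hpr w) ?_
    rw [hB]
    have hcc : (2:ℝ) * N + 1 ≤ 2 * w + 1 := by exact_mod_cast (by omega : 2*N+1 ≤ 2*w+1)
    gcongr
  have ha_le : ∀ w : ℕ, avg f (r - w) (r + w) ≤ dM f r := avg_le_dM f hf hbv r
  constructor
  · -- Nonempty
    obtain ⟨n, hn, hmax⟩ := Finset.exists_max_image (Finset.range (N + 1))
      (fun w : ℕ => avg f (r - w) (r + w)) ⟨0, Finset.mem_range.2 (Nat.succ_pos N)⟩
    have h2 : dM f r ≤ max (avg f (r - n) (r + n)) B := by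
      rw [dM_eq f hf r]
      apply ciSup_le
      intro w
      rcases le_or_gt w N with hw | hw
      · exact le_max_of_le_left (hmax w (Finset.mem_range.2 (by omega)))
      · exact le_max_of_le_right (htail w (by omega))
    have han : avg f (r - n) (r + n) = dM f r := by
      rcases (ha_le n).lt_or_eq with h | h
      · exfalso
        have := max_lt h hBlt
        linarith
      · exact h
    have ha0 : avg f (r - (0:ℕ)) (r + (0:ℕ)) = f r := by
      simp [avg]
    have hfr : f r < dM f r := by
      have h1 := hess r hpr hrq
      have h2 : 0 < peakVar f p r q := by unfold peakVar; linarith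
      linarith
    have hn0 : n ≠ 0 := by
      intro h
      rw [h, ha0] at han
      linarith
    exact ⟨(n : ℤ), by positivity, han⟩
  · -- Finite
    apply Set.Finite.subset (Set.finite_Icc 1 (N : ℤ))
    rintro w ⟨hw0, hweq⟩
    refine ⟨hw0, ?_⟩
    by_contra h
    push_neg at h
    have hwn : w = (w.toNat : ℤ) := (Int.toNat_of_nonneg hw0.le).symm
    have hNw : N ≤ w.toNat := by omega
    have := htail w.toNat hNw
    rw [← hwn] at this
    rw [hweq] at this
    linarith

end
end

section
/- Let f : ℤ → ℝ be nonnegative with bounded variation and let {p < r < q} be an essential peak for f with radius ω(r). Then there exist integers s and t such that r − ω(r) ≤ s ≤ 2q − (r + ω(r)), 2p − (r − ω(r)) ≤ t ≤ r + ω(r), f(s) ≥ Mf(r), and f(t) ≥ Mf(r). -/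
open Finset

noncomputable section

lemma abs_sub_le_dVar (f : ℤ → ℝ) (hbv : BddVar f) (k : ℤ) : |f k - f 0| ≤ dVar f := by
  have hnn : ∀ j : ℤ, 0 ≤ |f (j + 1) - f j| := fun j => abs_nonneg _
  rcases le_or_gt 0 k with hk | hk
  · obtain ⟨n, rfl⟩ : ∃ n : ℕ, k = (n : ℤ) := ⟨k.toNat, (Int.toNat_of_nonneg hk).symm⟩
    clear hk
    have htel : f (n : ℤ) - f 0 = ∑ i ∈ Finset.range n, (f ((i : ℤ) + 1) - f (i : ℤ)) := by
      induction n with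
      | zero => simp
      | succ m ih =>
        rw [Finset.sum_range_succ, ← ih]
        push_cast
        ring
    have h1 : |f (n:ℤ) - f 0| ≤ ∑ i ∈ Finset.range n, |f ((i:ℤ) + 1) - f (i:ℤ)| := by
      rw [htel]; exact Finset.abs_sum_le_sum_abs _ _
    have h2 : ∑ i ∈ Finset.range n, |f ((i:ℤ)+1) - f (i:ℤ)|
        = ∑ j ∈ (Finset.range n).image (fun i : ℕ => (i : ℤ)), |f (j+1) - f j| := by
      rw [Finset.sum_image]
      intro x _ y _ h; simp only at h; exact_mod_cast h
    calc |f (n:ℤ) - f 0| ≤ ∑ i ∈ Finset.range n, |f ((i:ℤ) + 1) - f (i:ℤ)| := h1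
      _ = ∑ j ∈ (Finset.range n).image (fun i : ℕ => (i : ℤ)), |f (j+1) - f j| := h2
      _ ≤ dVar f := Summable.sum_le_tsum _ (fun j _ => hnn j) hbv
  · obtain ⟨n, rfl⟩ : ∃ n : ℕ, k = -(n : ℤ) := ⟨(-k).toNat, by omega⟩
    clear hk
    have htel : f 0 - f (-(n:ℤ)) = ∑ i ∈ Finset.range n, (f ((-(i:ℤ) - 1) + 1) - f (-(i:ℤ) - 1)) := by
      induction n with
      | zero => simp
      | succ m ih =>
        rw [Finset.sum_range_succ, ← ih]
        push_cast
        ring_nf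
    have h1 : |f (-(n:ℤ)) - f 0| ≤ ∑ i ∈ Finset.range n, |f ((-(i:ℤ) - 1) + 1) - f (-(i:ℤ) - 1)| := by
      rw [abs_sub_comm, htel]; exact Finset.abs_sum_le_sum_abs _ _
    have h2 : ∑ i ∈ Finset.range n, |f ((-(i:ℤ)-1) + 1) - f (-(i:ℤ)-1)|
        = ∑ j ∈ (Finset.range n).image (fun i : ℕ => -(i : ℤ) - 1), |f (j+1) - f j| := by
      rw [Finset.sum_image]
      intro x _ y _ h; simp only at h; omega
    calc |f (-(n:ℤ)) - f 0| ≤ _ := h1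
      _ = _ := h2
      _ ≤ dVar f := Summable.sum_le_tsum _ (fun j _ => hnn j) hbv

lemma engineL (f : ℤ → ℝ) (M : ℝ) (a c b : ℤ) (hac : a < c) (hcb : c ≤ b)
    (hsum : ((b - a + 1 : ℤ) : ℝ) * M ≤ ∑ k ∈ Finset.Icc a b, f k)
    (hlt : ∀ k ∈ Finset.Ico a c, f k < M) : M < avg f c b := by
  have hsplit : Finset.Ico a c ∪ Finset.Icc c b = Finset.Icc a b := by
    ext k
    simp only [Finset.mem_union, Finset.mem_Ico, Finset.mem_Icc]
    omega
  have hdisj : Disjoint (Finset.Ico a c) (Finset.Icc c b) := by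
    rw [Finset.disjoint_left]
    intro k hk hk'
    simp only [Finset.mem_Ico] at hk
    simp only [Finset.mem_Icc] at hk'
    omega
  have hsum2 : ∑ k ∈ Finset.Icc a b, f k
      = ∑ k ∈ Finset.Ico a c, f k + ∑ k ∈ Finset.Icc c b, f k := by
    rw [← hsplit, Finset.sum_union hdisj]
  have hcard : (((Finset.Ico a c).card : ℕ) : ℝ) = ((c - a : ℤ) : ℝ) := by
    rw [Int.card_Ico]
    have : (((c - a).toNat : ℕ) : ℤ) = c - a := Int.toNat_of_nonneg (by omega)
    exact_mod_cast this
  have hlt2 : ∑ k ∈ Finset.Ico a c, f k < ((c - a : ℤ) : ℝ) * M := by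
    calc ∑ k ∈ Finset.Ico a c, f k < ∑ _k ∈ Finset.Ico a c, M :=
        Finset.sum_lt_sum_of_nonempty (by rw [Finset.nonempty_Ico]; exact hac) hlt
      _ = ((Finset.Ico a c).card : ℝ) * M := by rw [Finset.sum_const, nsmul_eq_mul]
      _ = ((c - a : ℤ) : ℝ) * M := by rw [hcard]
  have h2 : ((b - a + 1 : ℤ) : ℝ) * M = ((c - a : ℤ) : ℝ) * M + ((b - c + 1 : ℤ) : ℝ) * M := by
    push_cast
    ring
  have hJ : ((b - c + 1 : ℤ) : ℝ) * M < ∑ k ∈ Finset.Icc c b, f k := by linarith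
  have hpos : (0:ℝ) < ((b - c + 1 : ℤ) : ℝ) := by exact_mod_cast (by omega : (0:ℤ) < b - c + 1)
  rw [avg, lt_div_iff₀ hpos]
  linarith

lemma engineR (f : ℤ → ℝ) (M : ℝ) (a d b : ℤ) (had : a ≤ d) (hdb : d < b)
    (hsum : ((b - a + 1 : ℤ) : ℝ) * M ≤ ∑ k ∈ Finset.Icc a b, f k)
    (hlt : ∀ k ∈ Finset.Ioc d b, f k < M) : M < avg f a d := by
  have hsplit : Finset.Icc a d ∪ Finset.Ioc d b = Finset.Icc a b := by
    ext k
    simp only [Finset.mem_union, Finset.mem_Ioc, Finset.mem_Icc]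
    omega
  have hdisj : Disjoint (Finset.Icc a d) (Finset.Ioc d b) := by
    rw [Finset.disjoint_left]
    intro k hk hk'
    simp only [Finset.mem_Ioc] at hk'
    simp only [Finset.mem_Icc] at hk
    omega
  have hsum2 : ∑ k ∈ Finset.Icc a b, f k
      = ∑ k ∈ Finset.Icc a d, f k + ∑ k ∈ Finset.Ioc d b, f k := by
    rw [← hsplit, Finset.sum_union hdisj]
  have hcard : (((Finset.Ioc d b).card : ℕ) : ℝ) = ((b - d : ℤ) : ℝ) := by
    rw [Int.card_Ioc]
    have : (((b - d).toNat : ℕ) : ℤ) = b - d := Int.toNat_of_nonneg (by omega)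
    exact_mod_cast this
  have hlt2 : ∑ k ∈ Finset.Ioc d b, f k < ((b - d : ℤ) : ℝ) * M := by
    calc ∑ k ∈ Finset.Ioc d b, f k < ∑ _k ∈ Finset.Ioc d b, M :=
        Finset.sum_lt_sum_of_nonempty (by rw [Finset.nonempty_Ioc]; exact hdb) hlt
      _ = ((Finset.Ioc d b).card : ℝ) * M := by rw [Finset.sum_const, nsmul_eq_mul]
      _ = ((b - d : ℤ) : ℝ) * M := by rw [hcard]
  have h2 : ((b - a + 1 : ℤ) : ℝ) * M = ((d - a + 1 : ℤ) : ℝ) * M + ((b - d : ℤ) : ℝ) * M := by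
    push_cast
    ring
  have hJ : ((d - a + 1 : ℤ) : ℝ) * M < ∑ k ∈ Finset.Icc a d, f k := by linarith
  have hpos : (0:ℝ) < ((d - a + 1 : ℤ) : ℝ) := by exact_mod_cast (by omega : (0:ℤ) < d - a + 1)
  rw [avg, lt_div_iff₀ hpos]
  linarith
/-- for an essential peak `{p < r < q}` with radius `ω(r)` there are
`s ∈ [r - ω(r), 2q - (r + ω(r))]` and `t ∈ [2p - (r - ω(r)), r + ω(r)]` with
`f(s) ≥ Mf(r)` and `f(t) ≥ Mf(r)`. -/
theorem stmt6 (f : ℤ → ℝ) (hf : ∀ n, 0 ≤ f n) (hbv : BddVar f)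
    (p r q ω : ℤ) (hpk : IsEssentialPeak f p r q) (hrad : IsRadius f r ω) :
    ∃ s t : ℤ, r - ω ≤ s ∧ s ≤ 2 * q - (r + ω) ∧
      2 * p - (r - ω) ≤ t ∧ t ≤ r + ω ∧
      f s ≥ dM f r ∧ f t ≥ dM f r := by
  obtain ⟨⟨hpr, hrq, hMp, hMq⟩, -⟩ := hpk
  obtain ⟨hω, havg, -⟩ := hrad
  set M := dM f r with hMdef
  have habs : (fun k => |f k|) = f := funext fun k => abs_of_nonneg (hf k)
  -- f is bounded above
  have hfB : ∀ k : ℤ, f k ≤ f 0 + dVar f := by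
    intro k
    have h := abs_sub_le_dVar f hbv k
    have := abs_le.1 h
    linarith [this.2]
  -- averages are bounded by dM
  have hdM_ge : ∀ (n : ℤ) (R : ℕ), avg f (n - R) (n + R) ≤ dM f n := by
    intro n R
    have hbdd : BddAbove (Set.range fun R : ℕ => avg (fun k => |f k|) (n - R) (n + R)) := by
      refine ⟨f 0 + dVar f, ?_⟩
      rintro x ⟨R', rfl⟩
      simp only [habs]
      show avg f (n - (R':ℤ)) (n + (R':ℤ)) ≤ f 0 + dVar f
      have hxy : n - (R' : ℤ) ≤ n + (R' : ℤ) := by omega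
      have hpos : (0:ℝ) < ((n + (R':ℤ) - (n - (R':ℤ)) + 1 : ℤ) : ℝ) := by
        exact_mod_cast (by omega : (0:ℤ) < n + (R':ℤ) - (n - (R':ℤ)) + 1)
      rw [avg, div_le_iff₀ hpos]
      calc ∑ k ∈ Finset.Icc (n - (R':ℤ)) (n + (R':ℤ)), f k
          ≤ ∑ _k ∈ Finset.Icc (n - (R':ℤ)) (n + (R':ℤ)), (f 0 + dVar f) :=
            Finset.sum_le_sum fun k _ => hfB k
        _ = ((Finset.Icc (n - (R':ℤ)) (n + (R':ℤ))).card : ℝ) * (f 0 + dVar f) := by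
            rw [Finset.sum_const, nsmul_eq_mul]
        _ = (f 0 + dVar f) * ((n + (R':ℤ) - (n - (R':ℤ)) + 1 : ℤ) : ℝ) := by
            rw [Int.card_Icc]
            have : (((n + (R':ℤ) + 1 - (n - (R':ℤ))).toNat : ℕ) : ℤ)
                = n + (R':ℤ) - (n - (R':ℤ)) + 1 := by omega
            have h2 : (((n + (R':ℤ) + 1 - (n - (R':ℤ))).toNat : ℕ) : ℝ)
                = ((n + (R':ℤ) - (n - (R':ℤ)) + 1 : ℤ) : ℝ) := by exact_mod_cast this
            rw [h2]; ring
    have h := le_ciSup hbdd R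
    calc avg f (n - (R:ℤ)) (n + (R:ℤ)) = avg (fun k => |f k|) (n - (R:ℤ)) (n + (R:ℤ)) := by
          rw [habs]
      _ ≤ dM f n := h
  -- the window sum
  have hsumW : ((r + ω - (r - ω) + 1 : ℤ) : ℝ) * M ≤ ∑ k ∈ Finset.Icc (r - ω) (r + ω), f k := by
    have h0 : avg f (r - ω) (r + ω)
        = (∑ k ∈ Finset.Icc (r - ω) (r + ω), f k) / ((r + ω - (r - ω) + 1 : ℤ) : ℝ) := by
      rw [avg]
    have h := h0.symm.trans havg
    have hden : ((r + ω - (r - ω) + 1 : ℤ) : ℝ) ≠ 0 := by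
      exact_mod_cast (by omega : (r + ω - (r - ω) + 1 : ℤ) ≠ 0)
    rw [div_eq_iff hden] at h
    linarith [h.ge]
  -- f < M on the whole window is impossible
  have hWlt : (∀ k ∈ Finset.Icc (r - ω) (r + ω), f k < M) → False := by
    intro hlt
    have hne : (Finset.Icc (r - ω) (r + ω)).Nonempty := by
      rw [Finset.nonempty_Icc]; omega
    have h1 : ∑ k ∈ Finset.Icc (r - ω) (r + ω), f k
        < ∑ _k ∈ Finset.Icc (r - ω) (r + ω), M :=
      Finset.sum_lt_sum_of_nonempty hne hlt
    rw [Finset.sum_const, nsmul_eq_mul, Int.card_Icc] at h1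
    have hc : (((r + ω + 1 - (r - ω)).toNat : ℕ) : ℝ) = ((2 * ω + 1 : ℤ) : ℝ) := by
      have : (((r + ω + 1 - (r - ω)).toNat : ℕ) : ℤ) = 2 * ω + 1 := by omega
      exact_mod_cast this
    rw [hc] at h1
    have : ((2 * ω + 1 : ℤ) : ℝ) = ((r + ω - (r - ω) + 1 : ℤ) : ℝ) := by push_cast; ring
    rw [this] at h1
    linarith
  -- existence of s
  have hs : ∃ s ∈ Finset.Icc (r - ω) (2 * q - (r + ω)), M ≤ f s := by
    by_contra hcon
    push_neg at hcon
    rcases le_or_gt (r + ω) q with hcase | hcase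
    · exact hWlt fun k hk => hcon k (by simp only [Finset.mem_Icc] at *; omega)
    · have key : M < avg f (2 * q - (r + ω)) (r + ω) := by
        apply engineL f M (r - ω) (2 * q - (r + ω)) (r + ω) (by omega) (by omega) hsumW
        intro k hk
        apply hcon
        simp only [Finset.mem_Ico] at hk
        simp only [Finset.mem_Icc]
        omega
      set R : ℕ := (r + ω - q).toNat with hR
      have hRQ : (R : ℤ) = r + ω - q := Int.toNat_of_nonneg (by omega)
      have key2 : avg f (2 * q - (r + ω)) (r + ω) ≤ dM f q := by
        have h := hdM_ge q R
        rw [show q - (R : ℤ) = 2 * q - (r + ω) from by omega,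
            show q + (R : ℤ) = r + ω from by omega] at h
        exact h
      linarith
  -- existence of t
  have ht : ∃ t ∈ Finset.Icc (2 * p - (r - ω)) (r + ω), M ≤ f t := by
    by_contra hcon
    push_neg at hcon
    rcases le_or_gt p (r - ω) with hcase | hcase
    · exact hWlt fun k hk => hcon k (by simp only [Finset.mem_Icc] at *; omega)
    · have key : M < avg f (r - ω) (2 * p - (r - ω)) := by
        apply engineR f M (r - ω) (2 * p - (r - ω)) (r + ω) (by omega) (by omega) hsumW
        intro k hk
        apply hcon
        simp only [Finset.mem_Ioc] at hk
        simp only [Finset.mem_Icc]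
        omega
      set R : ℕ := (p - (r - ω)).toNat with hR
      have hRQ : (R : ℤ) = p - (r - ω) := Int.toNat_of_nonneg (by omega)
      have key2 : avg f (r - ω) (2 * p - (r - ω)) ≤ dM f p := by
        have h := hdM_ge p R
        rw [show p - (R : ℤ) = r - ω from by omega,
            show p + (R : ℤ) = 2 * p - (r - ω) from by omega] at h
        exact h
      linarith
  obtain ⟨s, hsmem, hsf⟩ := hs
  obtain ⟨t, htmem, htf⟩ := ht
  simp only [Finset.mem_Icc] at hsmem htmem
  exact ⟨s, t, hsmem.1, hsmem.2, htmem.1, htmem.2, hsf, htf⟩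

end
end

section
/- Let f : ℤ → ℝ be nonnegative with bounded variation and fix integers a_1 < b_1 < a_2 < b_2 < … < a_σ < b_σ < a_{σ+1} with Mf(a_i) < Mf(b_i) and Mf(a_{i+1}) < Mf(b_i) for 1 ≤ i ≤ σ, giving peaks 𝕡_i = {a_i < b_i < a_{i+1}}. Then the sum of Var 𝕡_i over those indices i for which 𝕡_i is an essential peak with radius ω(b_i) ≤ 32 is at most 1200·Var f. -/
open Finset

noncomputable section

lemma sum_Icc_top (g : ℤ → ℝ) {x t : ℤ} (h : x ≤ t + 1) :
    ∑ j ∈ Finset.Icc x (t + 1), g j = (∑ j ∈ Finset.Icc x t, g j) + g (t + 1) := by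
  have he : Finset.Icc x (t + 1) = insert (t + 1) (Finset.Icc x t) := by
    ext j; simp only [Finset.mem_Icc, Finset.mem_insert]; omega
  rw [he, Finset.sum_insert (by simp only [Finset.mem_Icc]; omega)]
  ring

lemma tele_nat (f : ℤ → ℝ) : ∀ n : ℕ, ∀ x : ℤ,
    |f (x + n) - f x| ≤ ∑ j ∈ Finset.Icc x (x + n - 1), |f (j + 1) - f j| := by
  intro n
  induction n with
  | zero => intro x; simp
  | succ m ih =>
    intro x
    have hstep : |f (x + (m + 1 : ℕ)) - f x|
        ≤ |f (x + m) - f x| + |f (x + m + 1) - f (x + m)| := by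
      have h1 : (x + ((m : ℤ) + 1)) = x + m + 1 := by ring
      push_cast
      rw [h1]
      have := abs_sub_le (f (x + m + 1)) (f (x + m)) (f x)
      linarith [this]
    have hsum : ∑ j ∈ Finset.Icc x (x + (m + 1 : ℕ) - 1), |f (j + 1) - f j|
        = (∑ j ∈ Finset.Icc x (x + m - 1), |f (j + 1) - f j|) + |f (x + m + 1) - f (x + m)| := by
      have h2 : x + (m + 1 : ℕ) - 1 = (x + (m : ℤ) - 1) + 1 := by push_cast; ring
      rw [h2, sum_Icc_top _ (by omega : x ≤ (x + (m : ℤ) - 1) + 1)]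
      have h3 : x + (m : ℤ) - 1 + 1 = x + m := by ring
      rw [h3]
    rw [hsum]
    have := ih x
    linarith

lemma tele_s9 (f : ℤ → ℝ) {x y : ℤ} (hxy : x ≤ y) :
    |f y - f x| ≤ ∑ j ∈ Finset.Icc x (y - 1), |f (j + 1) - f j| := by
  have h : y = x + ((y - x).toNat : ℤ) := by omega
  have h3 := tele_nat f (y - x).toNat x
  rw [← h] at h3
  exact h3

lemma exists_avg_le (f : ℤ → ℝ) {x y : ℤ} (hxy : x ≤ y) :
    ∃ k ∈ Finset.Icc x y, avg f x y ≤ f k := by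
  have hne : (Finset.Icc x y).Nonempty := ⟨x, by simp [hxy]⟩
  by_contra h
  push_neg at h
  have hsum : ∑ k ∈ Finset.Icc x y, f k < ∑ _k ∈ Finset.Icc x y, avg f x y :=
    Finset.sum_lt_sum_of_nonempty hne (fun k hk => h k hk)
  have hcard : ((Finset.Icc x y).card : ℝ) = ((y - x + 1 : ℤ) : ℝ) := by
    rw [Int.card_Icc]
    have h1 : ((y + 1 - x).toNat : ℤ) = y - x + 1 := by omega
    exact_mod_cast congrArg (fun t : ℤ => (t : ℝ)) h1
  rw [Finset.sum_const, nsmul_eq_mul, hcard] at hsum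
  have hpos : (0 : ℝ) < ((y - x + 1 : ℤ) : ℝ) := by
    exact_mod_cast (by omega : (0 : ℤ) < y - x + 1)
  unfold avg at hsum
  rw [mul_div_cancel₀ _ (ne_of_gt hpos)] at hsum
  exact lt_irrefl _ hsum

lemma bmono (σ : ℕ) (a b : ℕ → ℤ)
    (hab : ∀ i ∈ Finset.Icc 1 σ, a i < b i ∧ b i < a (i + 1)) :
    ∀ i' : ℕ, i' ≤ σ → ∀ i : ℕ, 1 ≤ i → i < i' → b i < b i' := by
  intro i'
  induction i' with
  | zero => intro _ i _ h; omega
  | succ m ih =>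
    intro hle i h1 hlt
    have hm1 : m ∈ Finset.Icc 1 σ := by simp; omega
    have hbm : b m < a (m + 1) := (hab m hm1).2
    have ham : a (m + 1) < b (m + 1) := (hab (m + 1) (by simp; omega)).1
    rcases Nat.lt_succ_iff_lt_or_eq.mp hlt with h | h
    · have := ih (by omega) i h1 h
      linarith
    · subst h; linarith

open scoped Classical

/-- Lemma 4 of the paper, the variation of the essential peaks of the
system with radius `ω(b_i) ≤ 32` is at most `1200·Var f`. -/
theorem stmt9 (f : ℤ → ℝ) (hf : ∀ n, 0 ≤ f n) (hbv : BddVar f)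
    (σ : ℕ) (a b : ℕ → ℤ)
    (hab : ∀ i ∈ Finset.Icc 1 σ, a i < b i ∧ b i < a (i + 1))
    (hM : ∀ i ∈ Finset.Icc 1 σ,
      dM f (a i) < dM f (b i) ∧ dM f (a (i + 1)) < dM f (b i)) :
    ∑ i ∈ (Finset.Icc 1 σ).filter
        (fun i => IsEssentialPeak f (a i) (b i) (a (i + 1)) ∧
          ∃ w : ℤ, IsRadius f (b i) w ∧ w ≤ 32),
      peakVar f (a i) (b i) (a (i + 1)) ≤ 1200 * dVar f := by
  set g : ℤ → ℝ := fun j => |f (j + 1) - f j| with hgdef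
  have hg0 : ∀ j, 0 ≤ g j := fun j => abs_nonneg _
  have hgsum : Summable g := hbv
  have hdvar0 : 0 ≤ dVar f := tsum_nonneg hg0
  set T := (Finset.Icc 1 σ).filter
      (fun i => IsEssentialPeak f (a i) (b i) (a (i + 1)) ∧
        ∃ w : ℤ, IsRadius f (b i) w ∧ w ≤ 32) with hTdef
  set W : ℕ → Finset ℤ := fun i => Finset.Icc (b i - 32) (b i + 31) with hWdef
  -- per-index bound
  have key : ∀ i ∈ T, peakVar f (a i) (b i) (a (i + 1)) ≤ 4 * ∑ j ∈ W i, g j := by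
    intro i hi
    rw [hTdef, Finset.mem_filter] at hi
    obtain ⟨hiIcc, ⟨⟨hpeak, hessb⟩, w, ⟨hw0, havg, _⟩, hw32⟩⟩ := hi
    obtain ⟨haib, hbia⟩ := hab i hiIcc
    have hfb : f (b i) ≤ dM f (b i) - (1 / 4) * peakVar f (a i) (b i) (a (i + 1)) :=
      hessb (b i) haib hbia
    obtain ⟨k, hk, hfk⟩ := exists_avg_le f (show b i - w ≤ b i + w by omega)
    rw [havg] at hfk
    simp only [Finset.mem_Icc] at hk
    have habs : |f k - f (b i)| ≤ ∑ j ∈ W i, g j := by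
      have hsubset : ∀ x y : ℤ, b i - 32 ≤ x → y ≤ b i + 32 →
          ∑ j ∈ Finset.Icc x (y - 1), g j ≤ ∑ j ∈ W i, g j := by
        intro x y hx hy
        apply Finset.sum_le_sum_of_subset_of_nonneg
        · intro j hj
          simp only [Finset.mem_Icc, hWdef] at hj ⊢
          omega
        · intro j _ _; exact hg0 j
      rcases le_total (b i) k with h | h
      · exact le_trans (tele_s9 f h) (hsubset (b i) k (by omega) (by omega))
      · rw [abs_sub_comm]
        exact le_trans (tele_s9 f h) (hsubset k (b i) (by omega) (by omega))
    have h1 : f k - f (b i) ≤ |f k - f (b i)| := le_abs_self _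
    have h2 : dM f (a i) < dM f (b i) := (hM i hiIcc).1
    have h3 : dM f (a (i + 1)) < dM f (b i) := (hM i hiIcc).2
    unfold peakVar at hfb ⊢
    linarith
  -- summation with overlap counting
  set U := T.biUnion W with hUdef
  have hWU : ∀ i ∈ T, W i ⊆ U := fun i hi => Finset.subset_biUnion_of_mem W hi
  have hTsub : ∀ j : ℤ, ∀ i ∈ T.filter (fun i => j ∈ W i), 1 ≤ i ∧ i ≤ σ := by
    intro j i hi
    rw [Finset.mem_filter, hTdef, Finset.mem_filter, Finset.mem_Icc] at hi
    exact hi.1.1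
  have count : ∀ j : ℤ, ((T.filter (fun i => j ∈ W i)).card : ℝ) ≤ 64 := by
    intro j
    have hcard : (T.filter (fun i => j ∈ W i)).card ≤ (Finset.Icc (j - 31) (j + 32)).card := by
      apply Finset.card_le_card_of_injOn b
      · intro i hi
        have hmem := Finset.mem_filter.mp hi
        have hj := hmem.2
        simp only [hWdef, Finset.mem_Icc, Finset.mem_coe] at hj ⊢
        omega
      · intro i hi i' hi' hbb
        by_contra hne
        have h1 := hTsub j i hi
        have h2 := hTsub j i' hi'
        rcases Nat.lt_or_ge i i' with h | h
        · exact absurd hbb (ne_of_lt (bmono σ a b hab i' h2.2 i h1.1 h))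
        · have h' : i' < i := by omega
          exact absurd hbb.symm (ne_of_lt (bmono σ a b hab i h1.2 i' h2.1 h'))
    have h64 : (Finset.Icc (j - 31) (j + 32)).card = 64 := by
      rw [Int.card_Icc]
      have : j + 32 + 1 - (j - 31) = 64 := by ring
      rw [this]
      rfl
    rw [h64] at hcard
    exact_mod_cast hcard
  calc ∑ i ∈ T, peakVar f (a i) (b i) (a (i + 1))
      ≤ ∑ i ∈ T, 4 * ∑ j ∈ W i, g j := Finset.sum_le_sum key
    _ = 4 * ∑ i ∈ T, ∑ j ∈ W i, g j := by rw [Finset.mul_sum]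
    _ = 4 * ∑ i ∈ T, ∑ j ∈ U, if j ∈ W i then g j else 0 := by
        congr 1
        apply Finset.sum_congr rfl
        intro i hi
        rw [Finset.sum_ite_mem, Finset.inter_eq_right.mpr (hWU i hi)]
    _ = 4 * ∑ j ∈ U, ∑ i ∈ T, if j ∈ W i then g j else 0 := by rw [Finset.sum_comm]
    _ = 4 * ∑ j ∈ U, ((T.filter (fun i => j ∈ W i)).card : ℝ) * g j := by
        congr 1
        apply Finset.sum_congr rfl
        intro j _
        rw [Finset.sum_ite, Finset.sum_const_zero, add_zero, Finset.sum_const, nsmul_eq_mul]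
    _ ≤ 4 * ∑ j ∈ U, 64 * g j := by
        have : ∀ j ∈ U, ((T.filter (fun i => j ∈ W i)).card : ℝ) * g j ≤ 64 * g j :=
          fun j _ => mul_le_mul_of_nonneg_right (count j) (hg0 j)
        have := Finset.sum_le_sum this
        linarith
    _ = 256 * ∑ j ∈ U, g j := by rw [← Finset.mul_sum]; ring
    _ ≤ 256 * dVar f := by
        have : ∑ j ∈ U, g j ≤ dVar f := Summable.sum_le_tsum U (fun j _ => hg0 j) hgsum
        linarith
    _ ≤ 1200 * dVar f := by linarith

end
end

section
/- Let f : ℤ → ℝ be nonnegative with bounded variation and fix a system of peaks as in the context. Let S be a finite set of pairs (n,k) with n ≥ 6 such that for each (n,k) ∈ S the class E^n_k is nonempty and satisfies alternative B. Then ∑_{(n,k)∈S} Var E^n_k ≤ 120·2^{12}·300 · Var f. -/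
open Finset

noncomputable section

open scoped Classical

/-- The class `E^n_k` of (indices of) essential peaks `𝕡_i = {a_i < b_i < a_{i+1}}`
of the fixed system with radius `2^{n-1} < ω(b_i) ≤ 2^n` and
`k·2^{n-5} < b_i ≤ (k+1)·2^{n-5}`. -/
def Enk (f : ℤ → ℝ) (a b : ℕ → ℤ) (σ n : ℕ) (k : ℤ) : Finset ℕ :=
  (Finset.Icc 1 σ).filter fun i =>
    IsEssentialPeak f (a i) (b i) (a (i + 1)) ∧
    ∃ w : ℤ, IsRadius f (b i) w ∧ 2 ^ (n - 1) < w ∧ w ≤ 2 ^ n ∧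
      k * 2 ^ (n - 5) < b i ∧ b i ≤ (k + 1) * 2 ^ (n - 5)

/-- `Var E^n_k`, the total variation of the peaks in the class `E^n_k`. -/
def varEnk (f : ℤ → ℝ) (a b : ℕ → ℤ) (σ n : ℕ) (k : ℤ) : ℝ :=
  ∑ i ∈ Enk f a b σ n k, peakVar f (a i) (b i) (a (i + 1))

/-- Alternative A of Lemma 5, for the class indexed by `(n,k)`, with `V = Var E^n_k`. -/
def AltA (f : ℤ → ℝ) (n : ℕ) (k : ℤ) (V : ℝ) : Prop :=
  ∃ s α β γ δ t : ℤ, s < α ∧ α < β ∧ β < γ ∧ γ < δ ∧ δ < t ∧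
    (k - 64) * 2 ^ (n - 5) ≤ s ∧ t ≤ (k + 65) * 2 ^ (n - 5) ∧
    2 ^ (n - 5) ≤ α - s ∧ 2 ^ (n - 5) ≤ β - α ∧ 2 ^ (n - 4) ≤ γ - β ∧
    2 ^ (n - 5) ≤ δ - γ ∧ 2 ^ (n - 5) ≤ t - δ ∧
    (1 / 24 : ℝ) * V ≤ min (f s) (f t) - max (avg f α β) (avg f γ δ)

/-- Alternative B of Lemma 5, for the class indexed by `(n,k)`, with `V = Var E^n_k`. -/
def AltB (f : ℤ → ℝ) (n : ℕ) (k : ℤ) (V : ℝ) : Prop :=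
  ∃ α β u v γ δ : ℤ, α < β ∧ β < u ∧ u < v ∧ v < γ ∧ γ < δ ∧
    (k - 64) * 2 ^ (n - 5) ≤ α ∧ δ ≤ (k + 65) * 2 ^ (n - 5) ∧
    2 ^ (n - 5) ≤ β - α ∧ 2 ^ (n - 5) ≤ u - β ∧ 2 ^ (n - 5) ≤ v - u ∧
    2 ^ (n - 5) ≤ γ - v ∧ 2 ^ (n - 5) ≤ δ - γ ∧
    (1 / 24 : ℝ) * V ≤ min (avg f α β) (avg f γ δ) - avg f u v


section Stmt14Aux
open MeasureTheory
open scoped ENNReal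

/-- left end of the window -/
def wS (n : ℕ) (k : ℤ) : ℤ := (k - 64) * 2 ^ (n - 5)
/-- right end of the window -/
def wE (n : ℕ) (k : ℤ) : ℤ := (k + 65) * 2 ^ (n - 5)

/-- max of `f` on `[x,y]` (0 if empty) -/
noncomputable def fmax (f : ℤ → ℝ) (x y : ℤ) : ℝ :=
  if h : x ≤ y then (Finset.Icc x y).sup' (by rwa [Finset.nonempty_Icc]) f else 0

lemma le_fmax {f : ℤ → ℝ} {x y z : ℤ} (hz : z ∈ Finset.Icc x y) : f z ≤ fmax f x y := by
  have h : x ≤ y := by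
    rcases Finset.mem_Icc.1 hz with ⟨h1, h2⟩; omega
  rw [fmax, dif_pos h]
  exact Finset.le_sup' f hz

lemma fmax_exists {f : ℤ → ℝ} {x y : ℤ} (h : x ≤ y) :
    ∃ z ∈ Finset.Icc x y, fmax f x y = f z := by
  rw [fmax, dif_pos h]
  obtain ⟨z, hz, hz'⟩ := Finset.exists_mem_eq_sup' (s := Finset.Icc x y) (by rwa [Finset.nonempty_Icc]) f
  exact ⟨z, hz, hz'⟩

lemma fmax_mono {f : ℤ → ℝ} {x y x' y' : ℤ} (h : x ≤ y) (hx : x' ≤ x) (hy : y ≤ y') :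
    fmax f x y ≤ fmax f x' y' := by
  obtain ⟨z, hz, hz'⟩ := fmax_exists (f := f) h
  rw [hz']
  refine le_fmax ?_
  rcases Finset.mem_Icc.1 hz with ⟨h1, h2⟩
  exact Finset.mem_Icc.2 ⟨by omega, by omega⟩

lemma card_Icc_real {x y : ℤ} (h : x ≤ y) :
    ((Finset.Icc x y).card : ℝ) = ((y - x + 1 : ℤ) : ℝ) := by
  rw [Int.card_Icc]
  have : ((y + 1 - x).toNat : ℤ) = y - x + 1 := by omega
  exact_mod_cast this

lemma avg_le_fmax {f : ℤ → ℝ} {x y : ℤ} (h : x ≤ y) : avg f x y ≤ fmax f x y := by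
  have hc : (0:ℝ) < ((y - x + 1 : ℤ) : ℝ) := by exact_mod_cast (by omega : (0:ℤ) < y - x + 1)
  rw [avg, div_le_iff₀ hc]
  have := Finset.sum_le_card_nsmul (Finset.Icc x y) f (fmax f x y) (fun z hz => le_fmax hz)
  rw [nsmul_eq_mul] at this
  calc ∑ k ∈ Finset.Icc x y, f k ≤ ((Finset.Icc x y).card : ℝ) * fmax f x y := this
    _ = fmax f x y * ((y - x + 1 : ℤ) : ℝ) := by rw [card_Icc_real h]; ring

/-- the "water depth" type function -/
noncomputable def dfn (f : ℤ → ℝ) (s e y : ℤ) : ℝ :=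
  max (min (fmax f s y) (fmax f y e) - f y) 0

lemma dfn_nonneg (f : ℤ → ℝ) (s e y : ℤ) : 0 ≤ dfn f s e y := le_max_right _ _


lemma lemA (f : ℤ → ℝ) {n : ℕ} {k : ℤ} {V : ℝ} (hB : AltB f n k V) :
    V ≤ 24 / (((2:ℤ) ^ (n-5) : ℤ) : ℝ) *
      ∑ y ∈ Finset.Icc (wS n k) (wE n k), dfn f (wS n k) (wE n k) y := by
  obtain ⟨α, β, u, v, γ, δ, h1, h2, h3, h4, h5, hsα, hδe, g1, g2, g3, g4, g5, hmain⟩ := hB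
  have hL : (0:ℤ) < 2 ^ (n-5) := pow_pos (by norm_num) _
  have hLr : (0:ℝ) < (((2:ℤ) ^ (n-5) : ℤ) : ℝ) := by exact_mod_cast hL
  set L : ℝ := (((2:ℤ) ^ (n-5) : ℤ) : ℝ) with hLdef
  have hs : wS n k ≤ α := hsα
  have he : δ ≤ wE n k := hδe
  set mA : ℝ := min (avg f α β) (avg f γ δ) with hmA
  set Sg : ℝ := ∑ y ∈ Finset.Icc (wS n k) (wE n k), dfn f (wS n k) (wE n k) y with hSg
  have hterm : ∀ y ∈ Finset.Icc u v, mA - f y ≤ dfn f (wS n k) (wE n k) y := by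
    intro y hy
    rcases Finset.mem_Icc.1 hy with ⟨hy1, hy2⟩
    have hA1 : avg f α β ≤ fmax f (wS n k) y :=
      le_trans (avg_le_fmax (le_of_lt h1)) (fmax_mono (le_of_lt h1) hs (by omega))
    have hA2 : avg f γ δ ≤ fmax f y (wE n k) :=
      le_trans (avg_le_fmax (le_of_lt h5)) (fmax_mono (le_of_lt h5) (by omega) he)
    have : mA ≤ min (fmax f (wS n k) y) (fmax f y (wE n k)) :=
      le_min (le_trans (min_le_left _ _) hA1) (le_trans (min_le_right _ _) hA2)
    have := sub_le_sub_right this (f y)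
    exact le_trans this (le_max_left _ _)
  have huv : u ≤ v := le_of_lt h3
  have hc : (0:ℝ) < ((v - u + 1 : ℤ) : ℝ) := by exact_mod_cast (by omega : (0:ℤ) < v - u + 1)
  set c : ℝ := ((v - u + 1 : ℤ) : ℝ) with hcdef
  have hsum1 : ∑ y ∈ Finset.Icc u v, (mA - f y) ≤ ∑ y ∈ Finset.Icc u v, dfn f (wS n k) (wE n k) y :=
    Finset.sum_le_sum hterm
  have hsum2 : ∑ y ∈ Finset.Icc u v, dfn f (wS n k) (wE n k) y ≤ Sg := by
    refine Finset.sum_le_sum_of_subset_of_nonneg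
      (Finset.Icc_subset_Icc (by omega) (by omega)) (fun y _ _ => dfn_nonneg _ _ _ _)
  have hS0 : (0:ℝ) ≤ Sg := Finset.sum_nonneg (fun y _ => dfn_nonneg _ _ _ _)
  have e1 : ∑ y ∈ Finset.Icc u v, (mA - f y) = c * mA - ∑ y ∈ Finset.Icc u v, f y := by
    rw [Finset.sum_sub_distrib, Finset.sum_const, nsmul_eq_mul, card_Icc_real huv]
  have e2 : mA - avg f u v = (c * mA - ∑ y ∈ Finset.Icc u v, f y) / c := by
    have hc' : c ≠ 0 := ne_of_gt hc
    rw [sub_div, mul_div_cancel_left₀ _ hc', avg, hcdef]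
  have key1 : mA - avg f u v ≤ Sg / c := by
    rw [e2]
    gcongr
    rw [← e1]
    linarith
  have hLc : L ≤ c := by
    rw [hLdef, hcdef]
    exact_mod_cast (by omega : (2:ℤ)^(n-5) ≤ v - u + 1)
  have key2 : Sg / c ≤ Sg / L := by gcongr
  have key3 : V ≤ 24 * (Sg / L) := by
    have h24 : V ≤ 24 * (mA - avg f u v) := by linarith
    nlinarith [key1, key2]
  have heq : 24 / L * Sg = 24 * (Sg / L) := by ring
  linarith

lemma realcount (j j2 : ℤ) (hjj : j < j2) (Sj : Finset (ℕ × ℤ))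
    (h6 : ∀ c ∈ Sj, 6 ≤ c.1)
    (hwin : ∀ c ∈ Sj, wS c.1 c.2 ≤ j ∧ j2 ≤ wE c.1 c.2) :
    ∑ c ∈ Sj, ((j2 - j : ℤ) : ℝ) / (((2:ℤ) ^ (c.1 - 5) : ℤ) : ℝ) ≤ 33540 := by
  classical
  rcases Sj.eq_empty_or_nonempty with rfl | hne
  · simp
  set g : ℝ := ((j2 - j : ℤ) : ℝ) with hgdef
  have hg : 0 < g := by rw [hgdef]; exact_mod_cast (by omega : (0:ℤ) < j2 - j)
  set F : ℕ → ℝ := fun n => g / (((2:ℤ) ^ (n - 5) : ℤ) : ℝ) with hF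
  have hF0 : ∀ n, 0 ≤ F n := by
    intro n
    apply div_nonneg hg.le
    exact_mod_cast (pow_pos (by norm_num : (0:ℤ) < 2) (n-5)).le
  have hcomp : ∑ c ∈ Sj, F c.1 = ∑ n ∈ Sj.image Prod.fst,
      (Sj.filter fun c => c.1 = n).card • F n := Finset.sum_comp F Prod.fst
  set N := Sj.image Prod.fst with hN
  have hNne : N.Nonempty := hne.image _
  -- fiber cardinality bound
  have hcard : ∀ n ∈ N, (Sj.filter fun c => c.1 = n).card ≤ 130 := by
    intro n hn
    set Fn := Sj.filter fun c => c.1 = n with hFn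
    have hFnne : Fn.Nonempty := by
      obtain ⟨c, hc, hc1⟩ := Finset.mem_image.1 hn
      exact ⟨c, Finset.mem_filter.2 ⟨hc, hc1⟩⟩
    set K := Fn.image Prod.snd with hK
    have hKcard : K.card = Fn.card := by
      apply Finset.card_image_of_injOn
      intro c hc c' hc' hcc
      have e1 : c.1 = n := (Finset.mem_filter.1 hc).2
      have e2 : c'.1 = n := (Finset.mem_filter.1 hc').2
      exact Prod.ext (e1.trans e2.symm) hcc
    have hKne : K.Nonempty := hFnne.image _
    set kM := K.max' hKne with hkM
    have hkey : ∀ kk ∈ K, kM - 129 ≤ kk ∧ kk ≤ kM := by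
      intro kk hkk
      refine ⟨?_, K.le_max' kk hkk⟩
      -- get the windows for kk and kM
      obtain ⟨c, hc, hc2⟩ := Finset.mem_image.1 hkk
      obtain ⟨c', hc', hc2'⟩ := Finset.mem_image.1 (K.max'_mem hKne)
      have hc1 : c.1 = n := (Finset.mem_filter.1 hc).2
      have hc1' : c'.1 = n := (Finset.mem_filter.1 hc').2
      have w1 := hwin c (Finset.mem_filter.1 hc).1
      have w2 := hwin c' (Finset.mem_filter.1 hc').1
      rw [wS, wE, hc1, hc2] at w1
      rw [wS, wE, hc1', hc2'] at w2
      -- (kM - 64) * L ≤ j < j2 ≤ (kk + 65) * L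
      have hL : (0:ℤ) < 2 ^ (n - 5) := pow_pos (by norm_num) _
      have hlt : (kM - 64) * 2 ^ (n-5) < (kk + 65) * 2 ^ (n-5) := by
        calc (kM - 64) * 2 ^ (n-5) ≤ j := w2.1
          _ < j2 := hjj
          _ ≤ (kk + 65) * 2 ^ (n-5) := w1.2
      have := lt_of_mul_lt_mul_right hlt hL.le
      omega
    have hsub : K ⊆ Finset.Icc (kM - 129) kM := by
      intro kk hkk
      exact Finset.mem_Icc.2 (hkey kk hkk)
    calc Fn.card = K.card := hKcard.symm
      _ ≤ (Finset.Icc (kM - 129) kM).card := Finset.card_le_card hsub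
      _ = 130 := by rw [Int.card_Icc]; norm_num; decide
  -- geometric bound
  have h6N : ∀ n ∈ N, 6 ≤ n := by
    intro n hn
    obtain ⟨c, hc, hc1⟩ := Finset.mem_image.1 hn
    exact hc1 ▸ h6 c hc
  set ns := N.min' hNne with hns
  have hnsN : ns ∈ N := N.min'_mem hNne
  have hns6 : 6 ≤ ns := h6N ns hnsN
  have hgbound : g ≤ 129 * (2:ℝ) ^ (ns - 5) := by
    obtain ⟨c, hc, hc1⟩ := Finset.mem_image.1 hnsN
    have w := hwin c hc
    rw [wS, wE, hc1] at w
    have : j2 - j ≤ 129 * 2 ^ (ns - 5) := by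
      have h1 := w.1
      have h2 := w.2
      nlinarith [h1, h2]
    rw [hgdef]
    exact_mod_cast this
  set M := N.image (fun n => n - 5) with hM
  have hsum_img : ∑ m ∈ M, ((1:ℝ)/2) ^ m = ∑ n ∈ N, ((1:ℝ)/2) ^ (n - 5) := by
    apply Finset.sum_image
    intro x hx y hy hxy
    have := h6N x hx; have := h6N y hy
    simp only at hxy
    omega
  have hMge : ∀ m ∈ M, ns - 5 ≤ m := by
    intro m hm
    obtain ⟨n, hn, hn1⟩ := Finset.mem_image.1 hm
    have := N.min'_le n hn
    omega
  have hgeo : ∑ m ∈ M, ((1:ℝ)/2) ^ m ≤ 2 * ((1:ℝ)/2) ^ (ns - 5) := by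
    have e1 : ∀ m ∈ M, ((1:ℝ)/2) ^ m = ((1:ℝ)/2)^(ns-5) * ((1:ℝ)/2)^(m - (ns-5)) := by
      intro m hm
      rw [← pow_add]
      congr 1
      have := hMge m hm
      omega
    rw [Finset.sum_congr rfl e1, ← Finset.mul_sum]
    have hinj : ∑ i ∈ M.image (fun m => m - (ns - 5)), ((1:ℝ)/2) ^ i
        = ∑ m ∈ M, ((1:ℝ)/2) ^ (m - (ns-5)) := by
      apply Finset.sum_image
      intro x hx y hy hxy
      have := hMge x hx; have := hMge y hy
      simp only at hxy
      omega
    have htsum : ∑ i ∈ M.image (fun m => m - (ns - 5)), ((1:ℝ)/2) ^ i ≤ 2 := by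
      have hs : Summable (fun i : ℕ => ((1:ℝ)/2) ^ i) :=
        summable_geometric_of_lt_one (by norm_num) (by norm_num)
      calc ∑ i ∈ M.image (fun m => m - (ns - 5)), ((1:ℝ)/2) ^ i
          ≤ ∑' i : ℕ, ((1:ℝ)/2) ^ i :=
            Summable.sum_le_tsum _ (fun i _ => by positivity) hs
        _ = 2 := by rw [tsum_geometric_of_lt_one (by norm_num) (by norm_num)]; norm_num
    calc ((1:ℝ)/2)^(ns-5) * ∑ m ∈ M, ((1:ℝ)/2) ^ (m - (ns-5))
        = ((1:ℝ)/2)^(ns-5) * ∑ i ∈ M.image (fun m => m - (ns - 5)), ((1:ℝ)/2) ^ i := by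
          rw [hinj]
      _ ≤ ((1:ℝ)/2)^(ns-5) * 2 := by
          apply mul_le_mul_of_nonneg_left htsum (by positivity)
      _ = 2 * ((1:ℝ)/2) ^ (ns - 5) := by ring
  have hFeq : ∀ n, F n = g * ((1:ℝ)/2) ^ (n - 5) := by
    intro n
    rw [hF]
    push_cast
    rw [div_pow, one_pow, div_eq_mul_inv, div_eq_mul_inv, one_mul]
  have hNsum : ∑ n ∈ N, F n ≤ 258 := by
    have : ∑ n ∈ N, F n = g * ∑ m ∈ M, ((1:ℝ)/2) ^ m := by
      rw [hsum_img, Finset.mul_sum]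
      exact Finset.sum_congr rfl (fun n _ => hFeq n)
    rw [this]
    have hpow1 : (2:ℝ) ^ (ns-5) * ((1:ℝ)/2) ^ (ns-5) = 1 := by
      rw [← mul_pow]; norm_num
    calc g * ∑ m ∈ M, ((1:ℝ)/2) ^ m ≤ g * (2 * ((1:ℝ)/2) ^ (ns - 5)) :=
          mul_le_mul_of_nonneg_left hgeo hg.le
      _ ≤ (129 * (2:ℝ) ^ (ns - 5)) * (2 * ((1:ℝ)/2) ^ (ns - 5)) := by
          apply mul_le_mul_of_nonneg_right hgbound (by positivity)
      _ = 258 * ((2:ℝ) ^ (ns-5) * ((1:ℝ)/2) ^ (ns-5)) := by ring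
      _ = 258 := by rw [hpow1]; norm_num
  -- assemble
  calc ∑ c ∈ Sj, ((j2 - j : ℤ) : ℝ) / (((2:ℤ) ^ (c.1 - 5) : ℤ) : ℝ)
      = ∑ n ∈ N, (Sj.filter fun c => c.1 = n).card • F n := hcomp
    _ ≤ ∑ n ∈ N, 130 * F n := by
        apply Finset.sum_le_sum
        intro n hn
        rw [nsmul_eq_mul]
        apply mul_le_mul_of_nonneg_right _ (hF0 n)
        exact_mod_cast hcard n hn
    _ = 130 * ∑ n ∈ N, F n := by rw [Finset.mul_sum]
    _ ≤ 130 * 258 := by linarith [hNsum]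
    _ = 33540 := by norm_num

/-- greatest `x < y` with `t ≤ f x`, when it exists -/
noncomputable def Jmap (f : ℤ → ℝ) (t : ℝ) (y : ℤ) : ℤ :=
  if h : ∃ x, x < y ∧ t ≤ f x then
    (Int.exists_greatest_of_bdd (P := fun z => z < y ∧ t ≤ f z)
      ⟨y, fun z hz => hz.1.le⟩ h).choose
  else 0

lemma Jmap_spec {f : ℤ → ℝ} {t : ℝ} {y : ℤ} (h : ∃ x, x < y ∧ t ≤ f x) :
    (Jmap f t y < y ∧ t ≤ f (Jmap f t y)) ∧
      ∀ z, z < y ∧ t ≤ f z → z ≤ Jmap f t y := by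
  rw [Jmap, dif_pos h]
  exact (Int.exists_greatest_of_bdd (P := fun z => z < y ∧ t ≤ f z)
      ⟨y, fun z hz => hz.1.le⟩ h).choose_spec

/-- least `z > j` with `t ≤ f z`, when it exists -/
noncomputable def J2map (f : ℤ → ℝ) (t : ℝ) (j : ℤ) : ℤ :=
  if h : ∃ z, j < z ∧ t ≤ f z then
    (Int.exists_least_of_bdd (P := fun z => j < z ∧ t ≤ f z)
      ⟨j, fun z hz => hz.1.le⟩ h).choose
  else 0

lemma J2map_spec {f : ℤ → ℝ} {t : ℝ} {j : ℤ} (h : ∃ z, j < z ∧ t ≤ f z) :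
    (j < J2map f t j ∧ t ≤ f (J2map f t j)) ∧
      ∀ z, j < z ∧ t ≤ f z → J2map f t j ≤ z := by
  rw [J2map, dif_pos h]
  exact (Int.exists_least_of_bdd (P := fun z => j < z ∧ t ≤ f z)
      ⟨j, fun z hz => hz.1.le⟩ h).choose_spec

lemma count (f : ℤ → ℝ) (t : ℝ) (S : Finset (ℕ × ℤ)) (hS6 : ∀ c ∈ S, 6 ≤ c.1) :
    ∑ p ∈ (S.sigma fun c => Finset.Icc (wS c.1 c.2) (wE c.1 c.2)).filter
        (fun p => f p.2 < t ∧
          t ≤ min (fmax f (wS p.1.1 p.1.2) p.2) (fmax f p.2 (wE p.1.1 p.1.2))),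
      ENNReal.ofReal (1 / (((2:ℤ) ^ (p.1.1 - 5) : ℤ) : ℝ))
    ≤ 33540 * ∑' x : ℤ, Set.indicator
        (Set.Ioc (min (f x) (f (x+1))) (max (f x) (f (x+1)))) (1 : ℝ → ℝ≥0∞) t := by
  classical
  set wgt : ((_ : ℕ × ℤ) × ℤ) → ℝ≥0∞ :=
    fun p => ENNReal.ofReal (1 / (((2:ℤ) ^ (p.1.1 - 5) : ℤ) : ℝ)) with hwgt
  set T' := (S.sigma fun c => Finset.Icc (wS c.1 c.2) (wE c.1 c.2)).filter
        (fun p => f p.2 < t ∧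
          t ≤ min (fmax f (wS p.1.1 p.1.2) p.2) (fmax f p.2 (wE p.1.1 p.1.2))) with hT'
  -- basic facts about members of T'
  have key : ∀ p ∈ T', p.1 ∈ S ∧ f p.2 < t ∧
      ((Jmap f t p.2 < p.2 ∧ t ≤ f (Jmap f t p.2)) ∧
        (∀ z, z < p.2 ∧ t ≤ f z → z ≤ Jmap f t p.2)) ∧
      wS p.1.1 p.1.2 ≤ Jmap f t p.2 ∧
      (∃ x2, p.2 ≤ x2 ∧ x2 ≤ wE p.1.1 p.1.2 ∧ t ≤ f x2) := by
    intro p hp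
    rcases Finset.mem_filter.1 hp with ⟨hps, hft, htm⟩
    rcases Finset.mem_sigma.1 hps with ⟨hpS, hpI⟩
    rcases Finset.mem_Icc.1 hpI with ⟨hse1, hse2⟩
    have ht1 : t ≤ fmax f (wS p.1.1 p.1.2) p.2 := le_trans htm (min_le_left _ _)
    have ht2 : t ≤ fmax f p.2 (wE p.1.1 p.1.2) := le_trans htm (min_le_right _ _)
    obtain ⟨x1, hx1, hx1e⟩ := fmax_exists (f := f) hse1
    obtain ⟨x2, hx2, hx2e⟩ := fmax_exists (f := f) hse2
    rcases Finset.mem_Icc.1 hx1 with ⟨hx1a, hx1b⟩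
    rcases Finset.mem_Icc.1 hx2 with ⟨hx2a, hx2b⟩
    have hfx1 : t ≤ f x1 := hx1e ▸ ht1
    have hfx2 : t ≤ f x2 := hx2e ▸ ht2
    have hx1y : x1 < p.2 := by
      rcases eq_or_lt_of_le hx1b with h | h
      · exfalso; rw [h] at hfx1; linarith
      · exact h
    have hex : ∃ x, x < p.2 ∧ t ≤ f x := ⟨x1, hx1y, hfx1⟩
    obtain ⟨hs1, hs2⟩ := Jmap_spec hex
    exact ⟨hpS, hft, ⟨hs1, hs2⟩, le_trans hx1a (hs2 x1 ⟨hx1y, hfx1⟩),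
      ⟨x2, hx2a, hx2b, hfx2⟩⟩
  have hmaps : ∀ p ∈ T', (fun q : ((_ : ℕ × ℤ) × ℤ) => Jmap f t q.2) p ∈
      T'.image (fun q : ((_ : ℕ × ℤ) × ℤ) => Jmap f t q.2) :=
    fun p hp => Finset.mem_image_of_mem _ hp
  rw [← Finset.sum_fiberwise_of_maps_to hmaps wgt]
  set B := T'.image (fun q : ((_ : ℕ × ℤ) × ℤ) => Jmap f t q.2) with hB
  have inner : ∀ j ∈ B,
      (∑ p ∈ T'.filter (fun q => Jmap f t q.2 = j), wgt p)
        ≤ 33540 * Set.indicator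
          (Set.Ioc (min (f j) (f (j+1))) (max (f j) (f (j+1)))) (1 : ℝ → ℝ≥0∞) t := by
    intro j hj
    obtain ⟨p0, hp0, hJp0⟩ := Finset.mem_image.1 hj
    obtain ⟨hp0S, hp0f, ⟨⟨hj1, hj2⟩, hjmax⟩, hjs, x2, hx2a, hx2b, hx2f⟩ := key p0 hp0
    rw [hJp0] at hj1 hj2 hjmax hjs
    -- j is a down-crossing
    have hfj1 : f (j+1) < t := by
      rcases eq_or_lt_of_le (show j + 1 ≤ p0.2 by omega) with h | h
      · rwa [h]
      · by_contra hc
        push_neg at hc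
        have := hjmax (j+1) ⟨h, hc⟩
        omega
    have hmem : t ∈ Set.Ioc (min (f j) (f (j+1))) (max (f j) (f (j+1))) := by
      constructor
      · exact lt_of_le_of_lt (min_le_right _ _) hfj1
      · exact le_trans hj2 (le_max_left _ _)
    have hind : Set.indicator
        (Set.Ioc (min (f j) (f (j+1))) (max (f j) (f (j+1)))) (1 : ℝ → ℝ≥0∞) t = 1 :=
      Set.indicator_of_mem hmem _
    -- the least up-crossing after j
    have hex2 : ∃ z, j < z ∧ t ≤ f z := ⟨x2, by omega, hx2f⟩
    obtain ⟨⟨hj2a, hj2b⟩, hj2min⟩ := J2map_spec hex2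
    set j2 := J2map f t j with hj2def
    -- the fiber is inside Sj × Ioo j j2
    set Sj := S.filter (fun c => wS c.1 c.2 ≤ j ∧ j2 ≤ wE c.1 c.2) with hSj
    have hsub : T'.filter (fun q => Jmap f t q.2 = j) ⊆
        Sj.sigma (fun _ => Finset.Ioo j j2) := by
      intro p hp
      rcases Finset.mem_filter.1 hp with ⟨hpT, hpJ⟩
      obtain ⟨hpS, hpf, ⟨⟨ha1, ha2⟩, hamax⟩, has, y2, hy2a, hy2b, hy2f⟩ := key p hpT
      rw [hpJ] at ha1 ha2 hamax has
      have hpj2 : p.2 < j2 := by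
        by_contra hc
        push_neg at hc
        rcases eq_or_lt_of_le hc with h | h
        · rw [h] at hj2b; linarith
        · have := hamax j2 ⟨h, hj2b⟩; omega
      have hj2e : j2 ≤ wE p.1.1 p.1.2 := by
        have : j2 ≤ y2 := hj2min y2 ⟨by omega, hy2f⟩
        omega
      exact Finset.mem_sigma.2 ⟨Finset.mem_filter.2 ⟨hpS, has, hj2e⟩,
        Finset.mem_Ioo.2 ⟨ha1, hpj2⟩⟩
    have hcard : ((Finset.Ioo j j2).card : ℝ) ≤ ((j2 - j : ℤ) : ℝ) := by
      rw [Int.card_Ioo]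
      have : ((j2 - j - 1).toNat : ℤ) ≤ j2 - j := by omega
      exact_mod_cast this
    calc ∑ p ∈ T'.filter (fun q => Jmap f t q.2 = j), wgt p
        ≤ ∑ p ∈ Sj.sigma (fun _ => Finset.Ioo j j2), wgt p :=
          Finset.sum_le_sum_of_subset hsub
      _ = ∑ c ∈ Sj, ∑ _y ∈ Finset.Ioo j j2,
            ENNReal.ofReal (1 / (((2:ℤ) ^ (c.1 - 5) : ℤ) : ℝ)) := by
          rw [Finset.sum_sigma]
      _ = ∑ c ∈ Sj, ((Finset.Ioo j j2).card : ℝ≥0∞) *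
            ENNReal.ofReal (1 / (((2:ℤ) ^ (c.1 - 5) : ℤ) : ℝ)) := by
          apply Finset.sum_congr rfl
          intro c _
          rw [Finset.sum_const, nsmul_eq_mul]
      _ ≤ ∑ c ∈ Sj, ENNReal.ofReal (((j2 - j : ℤ) : ℝ) / (((2:ℤ) ^ (c.1 - 5) : ℤ) : ℝ)) := by
          apply Finset.sum_le_sum
          intro c _
          rw [← ENNReal.ofReal_natCast, ← ENNReal.ofReal_mul (by positivity)]
          apply ENNReal.ofReal_le_ofReal
          rw [div_eq_mul_inv, div_eq_mul_inv, one_mul]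
          apply mul_le_mul_of_nonneg_right hcard
          have : (0:ℝ) < (((2:ℤ) ^ (c.1 - 5) : ℤ) : ℝ) := by
            exact_mod_cast pow_pos (by norm_num : (0:ℤ) < 2) (c.1 - 5)
          positivity
      _ = ENNReal.ofReal (∑ c ∈ Sj, ((j2 - j : ℤ) : ℝ) / (((2:ℤ) ^ (c.1 - 5) : ℤ) : ℝ)) := by
          rw [ENNReal.ofReal_sum_of_nonneg]
          intro c _
          have h2 : (0:ℝ) < (((2:ℤ) ^ (c.1 - 5) : ℤ) : ℝ) := by
            exact_mod_cast pow_pos (by norm_num : (0:ℤ) < 2) (c.1 - 5)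
          have hg : (0:ℝ) ≤ ((j2 - j : ℤ) : ℝ) := by
            exact_mod_cast (by omega : (0:ℤ) ≤ j2 - j)
          positivity
      _ ≤ ENNReal.ofReal 33540 := by
          apply ENNReal.ofReal_le_ofReal
          apply realcount j j2 hj2a Sj
          · intro c hc; exact hS6 c (Finset.mem_filter.1 hc).1
          · intro c hc; exact (Finset.mem_filter.1 hc).2
      _ ≤ 33540 * Set.indicator
            (Set.Ioc (min (f j) (f (j+1))) (max (f j) (f (j+1)))) (1 : ℝ → ℝ≥0∞) t := by
          rw [hind, mul_one]
          norm_num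
  calc ∑ j ∈ B, ∑ p ∈ T'.filter (fun q => Jmap f t q.2 = j), wgt p
      ≤ ∑ j ∈ B, 33540 * Set.indicator
          (Set.Ioc (min (f j) (f (j+1))) (max (f j) (f (j+1)))) (1 : ℝ → ℝ≥0∞) t :=
        Finset.sum_le_sum inner
    _ = 33540 * ∑ j ∈ B, Set.indicator
          (Set.Ioc (min (f j) (f (j+1))) (max (f j) (f (j+1)))) (1 : ℝ → ℝ≥0∞) t := by
        rw [Finset.mul_sum]
    _ ≤ 33540 * ∑' x : ℤ, Set.indicator
          (Set.Ioc (min (f x) (f (x+1))) (max (f x) (f (x+1)))) (1 : ℝ → ℝ≥0∞) t := by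
        apply mul_le_mul_right
        exact ENNReal.sum_le_tsum B

lemma ofReal_dfn (f : ℤ → ℝ) (s e y : ℤ) :
    ENNReal.ofReal (dfn f s e y) =
      volume (Set.Ioc (f y) (min (fmax f s y) (fmax f y e))) := by
  rw [Real.volume_Ioc, dfn]
  rcases le_total (min (fmax f s y) (fmax f y e) - f y) 0 with h | h
  · rw [max_eq_right h, ENNReal.ofReal_of_nonpos h, ENNReal.ofReal_zero]
  · rw [max_eq_left h]

lemma lemB (f : ℤ → ℝ) (hbv : BddVar f) (S : Finset (ℕ × ℤ)) (hS6 : ∀ c ∈ S, 6 ≤ c.1) :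
    ∑ c ∈ S, (1 / (((2:ℤ) ^ (c.1 - 5) : ℤ) : ℝ)) *
      ∑ y ∈ Finset.Icc (wS c.1 c.2) (wE c.1 c.2), dfn f (wS c.1 c.2) (wE c.1 c.2) y
    ≤ 33540 * dVar f := by
  have hL : ∀ n : ℕ, (0:ℝ) < (((2:ℤ) ^ (n - 5) : ℤ) : ℝ) := fun n => by
    exact_mod_cast pow_pos (by norm_num : (0:ℤ) < 2) (n - 5)
  have hdv0 : 0 ≤ dVar f := tsum_nonneg (fun k => abs_nonneg _)
  -- the per-pair integrand
  set g : ((_ : ℕ × ℤ) × ℤ) → ℝ → ℝ≥0∞ := fun p t =>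
    ENNReal.ofReal (1 / (((2:ℤ) ^ (p.1.1 - 5) : ℤ) : ℝ)) *
      Set.indicator (Set.Ioc (f p.2)
        (min (fmax f (wS p.1.1 p.1.2) p.2) (fmax f p.2 (wE p.1.1 p.1.2))))
        (1 : ℝ → ℝ≥0∞) t with hg
  have hgmeas : ∀ p, Measurable (g p) := by
    intro p
    exact (measurable_const.indicator measurableSet_Ioc).const_mul _
  set T0 := S.sigma fun c => Finset.Icc (wS c.1 c.2) (wE c.1 c.2) with hT0
  -- step 1 : ofReal LHS = ∑ over sigma of lintegrals
  have step1 : ENNReal.ofReal (∑ c ∈ S, (1 / (((2:ℤ) ^ (c.1 - 5) : ℤ) : ℝ)) *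
      ∑ y ∈ Finset.Icc (wS c.1 c.2) (wE c.1 c.2), dfn f (wS c.1 c.2) (wE c.1 c.2) y)
      = ∑ p ∈ T0, ∫⁻ t, g p t := by
    rw [ENNReal.ofReal_sum_of_nonneg (fun c _ => by
      have := hL c.1
      have h2 : 0 ≤ ∑ y ∈ Finset.Icc (wS c.1 c.2) (wE c.1 c.2),
          dfn f (wS c.1 c.2) (wE c.1 c.2) y :=
        Finset.sum_nonneg fun y _ => dfn_nonneg f _ _ y
      positivity)]
    rw [hT0, Finset.sum_sigma]
    apply Finset.sum_congr rfl
    intro c _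
    have h1L : (0:ℝ) ≤ 1 / (((2:ℤ) ^ (c.1 - 5) : ℤ) : ℝ) := le_of_lt (by
      rw [one_div]; exact inv_pos.2 (hL c.1))
    calc ENNReal.ofReal ((1 / (((2:ℤ) ^ (c.1 - 5) : ℤ) : ℝ)) *
          ∑ y ∈ Finset.Icc (wS c.1 c.2) (wE c.1 c.2), dfn f (wS c.1 c.2) (wE c.1 c.2) y)
        = ENNReal.ofReal (1 / (((2:ℤ) ^ (c.1 - 5) : ℤ) : ℝ)) *
          ∑ y ∈ Finset.Icc (wS c.1 c.2) (wE c.1 c.2),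
            ENNReal.ofReal (dfn f (wS c.1 c.2) (wE c.1 c.2) y) := by
          rw [ENNReal.ofReal_mul h1L,
            ENNReal.ofReal_sum_of_nonneg (fun y _ => dfn_nonneg f _ _ y)]
      _ = ∑ y ∈ Finset.Icc (wS c.1 c.2) (wE c.1 c.2), ∫⁻ t, g ⟨c, y⟩ t := by
          rw [Finset.mul_sum]
          apply Finset.sum_congr rfl
          intro y _
          rw [ofReal_dfn, ← lintegral_indicator_one (measurableSet_Ioc)]
          exact (lintegral_const_mul _ (measurable_const.indicator measurableSet_Ioc)).symm
  -- step 2 : swap sum and integral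
  have step2 : ∑ p ∈ T0, ∫⁻ t, g p t = ∫⁻ t, ∑ p ∈ T0, g p t :=
    (lintegral_finset_sum T0 (fun p _ => hgmeas p)).symm
  -- step 3 : pointwise bound via `count`
  have step3 : ∀ t : ℝ, ∑ p ∈ T0, g p t ≤
      33540 * ∑' x : ℤ, Set.indicator
        (Set.Ioc (min (f x) (f (x+1))) (max (f x) (f (x+1)))) (1 : ℝ → ℝ≥0∞) t := by
    intro t
    have hflt : ∑ p ∈ T0, g p t = ∑ p ∈ T0.filter
        (fun p => f p.2 < t ∧
          t ≤ min (fmax f (wS p.1.1 p.1.2) p.2) (fmax f p.2 (wE p.1.1 p.1.2))),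
        ENNReal.ofReal (1 / (((2:ℤ) ^ (p.1.1 - 5) : ℤ) : ℝ)) := by
      rw [Finset.sum_filter]
      apply Finset.sum_congr rfl
      intro p _
      simp only [hg]
      by_cases hmem : t ∈ Set.Ioc (f p.2)
          (min (fmax f (wS p.1.1 p.1.2) p.2) (fmax f p.2 (wE p.1.1 p.1.2)))
      · rw [Set.indicator_of_mem hmem, Pi.one_apply, mul_one, if_pos (Set.mem_Ioc.1 hmem)]
      · rw [Set.indicator_of_notMem hmem, mul_zero, if_neg (fun h => hmem (Set.mem_Ioc.2 h))]
    rw [hflt]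
    exact count f t S hS6
  -- step 4 : integral of the crossing counting function
  have step4 : (∫⁻ t, ∑' x : ℤ, Set.indicator
        (Set.Ioc (min (f x) (f (x+1))) (max (f x) (f (x+1)))) (1 : ℝ → ℝ≥0∞) t)
      = ENNReal.ofReal (dVar f) := by
    have hswap := lintegral_tsum (μ := (volume : MeasureTheory.Measure ℝ))
      (f := fun (x:ℤ) (t:ℝ) => (Set.Ioc (min (f x) (f (x+1))) (max (f x) (f (x+1)))).indicator
        (1 : ℝ → ℝ≥0∞) t)
      (fun x => (measurable_const.indicator measurableSet_Ioc).aemeasurable)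
    rw [hswap]
    have : ∀ x : ℤ, (∫⁻ t, Set.indicator
        (Set.Ioc (min (f x) (f (x+1))) (max (f x) (f (x+1)))) (1 : ℝ → ℝ≥0∞) t)
        = ENNReal.ofReal (|f (x+1) - f x|) := by
      intro x
      rw [lintegral_indicator_one measurableSet_Ioc, Real.volume_Ioc]
      congr 1
      rw [← max_sub_min_eq_abs]
    rw [tsum_congr this, dVar,
      ← ENNReal.ofReal_tsum_of_nonneg (fun x => abs_nonneg _) hbv]
  -- assemble
  have main : ENNReal.ofReal (∑ c ∈ S, (1 / (((2:ℤ) ^ (c.1 - 5) : ℤ) : ℝ)) *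
      ∑ y ∈ Finset.Icc (wS c.1 c.2) (wE c.1 c.2), dfn f (wS c.1 c.2) (wE c.1 c.2) y)
      ≤ ENNReal.ofReal (33540 * dVar f) := by
    rw [step1, step2]
    calc (∫⁻ t, ∑ p ∈ T0, g p t)
        ≤ ∫⁻ t, 33540 * ∑' x : ℤ, Set.indicator
            (Set.Ioc (min (f x) (f (x+1))) (max (f x) (f (x+1)))) (1 : ℝ → ℝ≥0∞) t :=
          lintegral_mono step3
      _ = 33540 * ENNReal.ofReal (dVar f) := by
          rw [lintegral_const_mul' _ _ (by norm_num), step4]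
      _ = ENNReal.ofReal (33540 * dVar f) := by
          rw [ENNReal.ofReal_mul (by norm_num : (0:ℝ) ≤ 33540)]
          norm_num
  have h0 : (0:ℝ) ≤ 33540 * dVar f := by positivity
  exact (ENNReal.ofReal_le_ofReal_iff h0).1 main

end Stmt14Aux

/-- the total variation of the classes satisfying alternative B is at
most `120·2^12·300·Var f`. -/
theorem stmt14 (f : ℤ → ℝ) (hf : ∀ n, 0 ≤ f n) (hbv : BddVar f)
    (σ : ℕ) (a b : ℕ → ℤ)
    (hab : ∀ i ∈ Finset.Icc 1 σ, a i < b i ∧ b i < a (i + 1))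
    (hM : ∀ i ∈ Finset.Icc 1 σ,
      dM f (a i) < dM f (b i) ∧ dM f (a (i + 1)) < dM f (b i))
    (S : Finset (ℕ × ℤ))
    (hS : ∀ c ∈ S, 6 ≤ c.1 ∧ (Enk f a b σ c.1 c.2).Nonempty ∧
      AltB f c.1 c.2 (varEnk f a b σ c.1 c.2)) :
    ∑ c ∈ S, varEnk f a b σ c.1 c.2 ≤ 120 * 2 ^ 12 * 300 * dVar f := by
  have key : ∀ c ∈ S, varEnk f a b σ c.1 c.2 ≤
      24 / (((2:ℤ) ^ (c.1 - 5) : ℤ) : ℝ) *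
        ∑ y ∈ Finset.Icc (wS c.1 c.2) (wE c.1 c.2), dfn f (wS c.1 c.2) (wE c.1 c.2) y :=
    fun c hc => lemA f (hS c hc).2.2
  have hd0 : 0 ≤ dVar f := tsum_nonneg fun k => abs_nonneg _
  have sum2 : ∑ c ∈ S, 24 / (((2:ℤ) ^ (c.1 - 5) : ℤ) : ℝ) *
        ∑ y ∈ Finset.Icc (wS c.1 c.2) (wE c.1 c.2), dfn f (wS c.1 c.2) (wE c.1 c.2) y
      = 24 * ∑ c ∈ S, (1 / (((2:ℤ) ^ (c.1 - 5) : ℤ) : ℝ)) *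
        ∑ y ∈ Finset.Icc (wS c.1 c.2) (wE c.1 c.2), dfn f (wS c.1 c.2) (wE c.1 c.2) y := by
    rw [Finset.mul_sum]
    exact Finset.sum_congr rfl fun c _ => by ring
  calc ∑ c ∈ S, varEnk f a b σ c.1 c.2
      ≤ ∑ c ∈ S, 24 / (((2:ℤ) ^ (c.1 - 5) : ℤ) : ℝ) *
        ∑ y ∈ Finset.Icc (wS c.1 c.2) (wE c.1 c.2), dfn f (wS c.1 c.2) (wE c.1 c.2) y :=
        Finset.sum_le_sum key
    _ = 24 * ∑ c ∈ S, (1 / (((2:ℤ) ^ (c.1 - 5) : ℤ) : ℝ)) *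
        ∑ y ∈ Finset.Icc (wS c.1 c.2) (wE c.1 c.2), dfn f (wS c.1 c.2) (wE c.1 c.2) y := sum2
    _ ≤ 24 * (33540 * dVar f) := by
        apply mul_le_mul_of_nonneg_left (lemB f hbv S (fun c hc => (hS c hc).1)) (by norm_num)
    _ ≤ 120 * 2 ^ 12 * 300 * dVar f := by nlinarith [hd0]

end
end

section
/- Let f : ℤ → ℝ be nonnegative with bounded variation. Then sup_{n∈ℤ} Mf(n) − inf_{n∈ℤ} Mf(n) ≤ sup_{n∈ℤ} f(n) − inf_{n∈ℤ} f(n) ≤ Var f. -/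
open Finset

noncomputable section

lemma tele_aux (f : ℤ → ℝ) (b : ℤ) (n : ℕ) :
    f (b + n) - f b = ∑ i ∈ range n, (f (b + i + 1) - f (b + i)) := by
  have := Finset.sum_range_sub (fun i : ℕ => f (b + i)) n
  simp only [Nat.cast_add, Nat.cast_one, ← add_assoc] at this
  simpa using this.symm

lemma sum_abs_le_var (f : ℤ → ℝ) (hbv : BddVar f) (b : ℤ) (n : ℕ) :
    ∑ i ∈ range n, |f (b + i + 1) - f (b + i)| ≤ dVar f := by
  calc ∑ i ∈ range n, |f (b + i + 1) - f (b + i)|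
      = ∑ k ∈ (range n).map ⟨fun i : ℕ => b + i, by intro x y h; simpa using h⟩,
          |f (k + 1) - f k| := by
        rw [Finset.sum_map]; rfl
    _ ≤ dVar f := Summable.sum_le_tsum _ (fun _ _ => abs_nonneg _) hbv

lemma key_diff (f : ℤ → ℝ) (hbv : BddVar f) (a b : ℤ) : f a - f b ≤ dVar f := by
  have habs : ∀ c : ℤ, ∀ n : ℕ, |f (c + n) - f c| ≤ dVar f := by
    intro c n
    rw [tele_aux f c n]
    exact (Finset.abs_sum_le_sum_abs _ _).trans (sum_abs_le_var f hbv c n)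
  rcases le_total b a with h | h
  · have : a = b + ((a - b).toNat : ℤ) := by omega
    rw [this]
    exact (le_abs_self _).trans (habs b _)
  · have hb : b = a + ((b - a).toNat : ℤ) := by omega
    calc f a - f b ≤ |f b - f a| := by rw [abs_sub_comm]; exact le_abs_self _
      _ ≤ dVar f := by rw [hb]; exact habs a _

lemma avg_le_of_le (f : ℤ → ℝ) (S : ℝ) (h : ∀ k, f k ≤ S) {x y : ℤ} (hxy : x ≤ y) :
    avg f x y ≤ S := by
  have hc : (0 : ℝ) < ((y - x + 1 : ℤ) : ℝ) := by exact_mod_cast (by omega : (0:ℤ) < y - x + 1)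
  rw [avg, div_le_iff₀ hc]
  calc ∑ k ∈ Icc x y, f k ≤ ∑ _k ∈ Icc x y, S := Finset.sum_le_sum (fun k _ => h k)
    _ = (Icc x y).card * S := by rw [Finset.sum_const, nsmul_eq_mul]
    _ = S * ((y - x + 1 : ℤ) : ℝ) := by
        have hcard : (((Icc x y).card : ℕ) : ℝ) = ((y - x + 1 : ℤ) : ℝ) := by
          rw [Int.card_Icc, show y + 1 - x = y - x + 1 from by ring]
          exact_mod_cast Int.toNat_of_nonneg (by omega : (0:ℤ) ≤ y - x + 1)
        rw [hcard]; ring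

/-- for nonnegative `f` of bounded variation,
`sup Mf - inf Mf ≤ sup f - inf f ≤ Var f`. -/
theorem stmt15 (f : ℤ → ℝ) (hf : ∀ n, 0 ≤ f n) (hbv : BddVar f) :
    (⨆ n : ℤ, dM f n) - (⨅ n : ℤ, dM f n) ≤ (⨆ n : ℤ, f n) - (⨅ n : ℤ, f n) ∧
      (⨆ n : ℤ, f n) - (⨅ n : ℤ, f n) ≤ dVar f := by
  have hbA : BddAbove (Set.range f) := by
    refine ⟨f 0 + dVar f, ?_⟩
    rintro _ ⟨n, rfl⟩
    linarith [key_diff f hbv n 0]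
  have hbB : BddBelow (Set.range f) := ⟨0, by rintro _ ⟨n, rfl⟩; exact hf n⟩
  have hfS : ∀ n, f n ≤ ⨆ m : ℤ, f m := fun n => le_ciSup hbA n
  have hIf : ∀ n, (⨅ m : ℤ, f m) ≤ f n := fun n => ciInf_le hbB n
  have habs : ∀ k, |f k| = f k := fun k => abs_of_nonneg (hf k)
  have havg : ∀ (n : ℤ) (r : ℕ),
      avg (fun k => |f k|) (n - r) (n + r) ≤ ⨆ m : ℤ, f m := by
    intro n r
    have he : avg (fun k => |f k|) (n - r) (n + r) = avg f (n - r) (n + r) := by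
      simp [avg, habs]
    rw [he]
    exact avg_le_of_le f _ hfS (by omega)
  have hBddM : ∀ n : ℤ,
      BddAbove (Set.range fun r : ℕ => avg (fun k => |f k|) (n - r) (n + r)) := by
    intro n
    exact ⟨⨆ m : ℤ, f m, by rintro _ ⟨r, rfl⟩; exact havg n r⟩
  have hdM_le : ∀ n, dM f n ≤ ⨆ m : ℤ, f m := fun n => ciSup_le (havg n)
  have hle_dM : ∀ n, f n ≤ dM f n := by
    intro n
    have h0 : avg (fun k => |f k|) (n - (0 : ℕ)) (n + (0 : ℕ)) = f n := by
      simp [avg, habs]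
    calc f n = avg (fun k => |f k|) (n - (0 : ℕ)) (n + (0 : ℕ)) := h0.symm
      _ ≤ dM f n := le_ciSup (hBddM n) 0
  have h1 : (⨆ n : ℤ, dM f n) ≤ ⨆ n : ℤ, f n := ciSup_le hdM_le
  have h2 : (⨅ n : ℤ, f n) ≤ ⨅ n : ℤ, dM f n :=
    le_ciInf fun n => (hIf n).trans (hle_dM n)
  constructor
  · linarith
  · have h3 : (⨆ n : ℤ, f n) ≤ dVar f + ⨅ n : ℤ, f n := by
      apply ciSup_le
      intro n
      have h4 : f n - dVar f ≤ ⨅ m : ℤ, f m :=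
        le_ciInf fun m => by linarith [key_diff f hbv n m]
      linarith
    linarith

end
end
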